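/- arXiv:2209.08761 — 5 statements merged into one kernel-verified Lean document; each statement's English description precedes it below -/
import Mathlib

section
/- Uniqueness of the quantum reliability operator: if L is a self-adjoint operator on ℓ²_ℂ(Λ_G) such that ψ ↦ ⟨ψ|L|ψ⟩ restricted to unit vectors takes values in [0,1] and satisfies the extension axiom and the entanglement axiom, then L equals the orthogonal projection onto the span of the connected classical states. -/
open scoped Classical
noncomputable section

/-- A finite set has finitely many setoids (partitions). -/
instance setoidFinite (U : Type) [Finite U] : Finite (Setoid U) :=
  Finite.of_injective (fun s => s.r)
    (fun _ _ h => Setoid.ext fun x y => iff_of_eq (congrFun (congrFun h x) y))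

noncomputable instance setoidFintype (U : Type) [Finite U] : Fintype (Setoid U) :=
  Fintype.ofFinite _

/-- Adjacency via an operating edge of the state `ε`. -/
def edgeAdj {V E : Type} (s t : E → V) (ε : E → Bool) (x y : V) : Prop :=
  ∃ e, ε e = true ∧ ((s e = x ∧ t e = y) ∨ (s e = y ∧ t e = x))

/-- Connectivity of the spanning subgraph determined by `ε`, on the vertex set `S`,
after further identifying vertices via the relation `σ`. -/
def ConnectedModOn {V E : Type} (S : Set V) (s t : E → V) (σ : V → V → Prop)
    (ε : E → Bool) : Prop :=
  ∀ x ∈ S, ∀ y ∈ S, Relation.EqvGen (fun a b => edgeAdj s t ε a b ∨ σ a b) x y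

/-- A state is connected if the spanning subgraph of operating edges is connected. -/
def ConnectedState {V E : Type} (S : Set V) (s t : E → V) (ε : E → Bool) : Prop :=
  ConnectedModOn S s t (fun _ _ => False) ε

/-- The identification relation on vertices induced by a partition (setoid) `γ` of `U`. -/
def partRel {V : Type} (U : Set V) (γ : Setoid ↥U) : V → V → Prop :=
  fun a b => ∃ (ha : a ∈ U) (hb : b ∈ U), γ.r ⟨a, ha⟩ ⟨b, hb⟩

/-- The state `ε` has no islands: every vertex of `S` is joined to some vertex of `U`. -/
def NoIslands {V E : Type} (S U : Set V) (s t : E → V) (ε : E → Bool) : Prop :=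
  ∀ x ∈ S, ∃ u ∈ U, Relation.EqvGen (edgeAdj s t ε) x u

/-- The partition `P(ε)` of `U` induced by the connected components of the state `ε`. -/
def inducedPart {V E : Type} (U : Set V) (s t : E → V) (ε : E → Bool) : Setoid ↥U :=
  ⟨fun u u' => Relation.EqvGen (edgeAdj s t ε) u.1 u'.1,
    ⟨fun u => Relation.EqvGen.refl u.1,
     fun h => Relation.EqvGen.symm _ _ h,
     fun h h' => Relation.EqvGen.trans _ _ _ h h'⟩⟩

/-- Probability of the classical state `ε` given Bernoulli parameters `p`. -/
def stProb {E : Type} [Fintype E] (p : E → ℝ) (ε : E → Bool) : ℝ :=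
  ∏ e, if ε e then p e else 1 - p e

/-- Reliability: probability that the random state satisfies the connectivity
predicate `Conn`. -/
def relOf {E : Type} [Fintype E] (p : E → ℝ) (Conn : (E → Bool) → Prop) : ℝ :=
  ∑ ε : E → Bool, if Conn ε then stProb p ε else 0

/-- The hermitian inner product of `ℓ²_ℂ(Λ)`, antilinear in the first argument. -/
def qdot {Λ : Type} [Fintype Λ] (x y : Λ → ℂ) : ℂ :=
  ∑ ε, (starRingEnd ℂ) (x ε) * y ε

/-- The orthogonal projection of `ℓ²_ℂ(Λ)` onto the span of `{|ε⟩ : ε ∈ C}`. -/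
def projC {Λ : Type} [Fintype Λ] (C : Set Λ) : (Λ → ℂ) →ₗ[ℂ] (Λ → ℂ) where
  toFun ψ := fun ε => if ε ∈ C then ψ ε else 0
  map_add' x y := by funext ε; by_cases h : ε ∈ C <;> simp [h]
  map_smul' c x := by funext ε; by_cases h : ε ∈ C <;> simp [h]

/-- Tensor product of operators under `ℓ²(Λ₁ × Λ₂) ≅ ℓ²(Λ₁) ⊗ ℓ²(Λ₂)`. -/
def tensorOp {A B : Type} [Fintype A] [Fintype B]
    (F : (A → ℂ) →ₗ[ℂ] (A → ℂ)) (G : (B → ℂ) →ₗ[ℂ] (B → ℂ)) :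
    (A × B → ℂ) →ₗ[ℂ] (A × B → ℂ) where
  toFun ψ := fun q => ∑ x : A × B, ψ x *
    (F (fun a => if a = x.1 then 1 else 0) q.1 * G (fun b => if b = x.2 then 1 else 0) q.2)
  map_add' x y := by
    funext q
    simp [add_mul, Finset.sum_add_distrib]
  map_smul' c x := by
    funext q
    simp only [Pi.smul_apply, smul_eq_mul, RingHom.id_apply]
    rw [Finset.mul_sum]
    exact Finset.sum_congr rfl (fun x _ => by ring)

/-- Tensor product of state vectors. -/
def vtens {A B : Type} (ψ₁ : A → ℂ) (ψ₂ : B → ℂ) : A × B → ℂ :=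
  fun q => ψ₁ q.1 * ψ₂ q.2

/-- Entry of the connectivity matrix: `1` if the common coarsening of the two
partitions has a single block, `0` otherwise.  (In Mathlib's order on `Setoid U`,
the common coarsening is the join `γ ⊔ γ'`, and having a single block means `= ⊤`.) -/
def connMatrix (U : Type) [Finite U] : Matrix (Setoid U) (Setoid U) ℝ :=
  fun γ γ' => if γ ⊔ γ' = ⊤ then 1 else 0


/-!
Write `L_{ζχ} = ⟨ζ|L|χ⟩`. The extension axiom at the point-mass parameters `p = 1_ε` sees the
basis state `|ε⟩`, so `L_{εε} = [ε connected]`. For `ζ ≠ χ` and `|z| = 1` the unit vector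
`(|ζ⟩ + z|χ⟩)/√2` has form `(L_{ζζ} + L_{χχ} + w(z))/2` with `w(z) = z L_{ζχ} + z̄ L_{χζ}`.
If exactly one of `ζ, χ` is connected, the entanglement axiom makes this `1/2`, so `w(z) = 0`.
Otherwise `L_{ζζ} = L_{χχ} = d ∈ {0, 1}`, and as `d ± w(z)/2` both lie in `[0, 1]`, again
`w(z) = 0`. Finally `w(1) = w(i) = 0` gives `L_{ζχ} = L_{χζ} = 0`.
-/

lemma Complex.eq_zero_of_forall_norm_eq_one {a b : ℂ}
    (h : ∀ z : ℂ, ‖z‖ = 1 → z * a + star z * b = 0) : a = 0 ∧ b = 0 := by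
  have h1 := h 1 (by simp)
  have hI := h Complex.I (by simp)
  simp only [star_one, one_mul, Complex.star_def, Complex.conj_I] at h1 hI
  constructor
  · linear_combination h1 / 2 - Complex.I * hI / 2 + (a - b) / 2 * Complex.I_sq
  · linear_combination h1 / 2 + Complex.I * hI / 2 + (b - a) / 2 * Complex.I_sq

lemma Complex.eq_zero_of_forall_norm_eq_one_of_mem_Icc {a b : ℂ} {d : ℝ} (hd : d = 0 ∨ d = 1)
    (h : ∀ z : ℂ, ‖z‖ = 1 →
      ∃ r : ℝ, 0 ≤ r ∧ r ≤ 1 ∧ (d : ℂ) + (z * a + star z * b) / 2 = r) :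
    a = 0 ∧ b = 0 := by
  refine Complex.eq_zero_of_forall_norm_eq_one fun z hz => ?_
  obtain ⟨r, hr0, hr1, hr⟩ := h z hz
  obtain ⟨r', hr0', hr1', hr'⟩ := h (-z) (by rw [norm_neg, hz])
  have hsum : r + r' = 2 * d := by
    exact_mod_cast (show ((r + r' : ℝ) : ℂ) = ((2 * d : ℝ) : ℂ) by
      push_cast; simp only [star_neg, neg_mul] at hr'; linear_combination -hr - hr')
  have hrd : r = d := by rcases hd with rfl | rfl <;> linarith
  linear_combination 2 * hr + 2 * (congrArg Complex.ofReal hrd)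

lemma qdot_eq_star_dotProduct {Λ : Type} [Fintype Λ] (x y : Λ → ℂ) :
    qdot x y = star x ⬝ᵥ y := rfl

section QuadraticForm

variable {Λ : Type} [DecidableEq Λ]

def superpos (ζ χ : Λ) (z : ℂ) (p : ℝ) : Λ → ℂ :=
  fun ε => if ε = ζ then (Real.sqrt p : ℂ) else if ε = χ then z * Real.sqrt (1 - p) else 0

lemma superpos_eq {ζ χ : Λ} (hne : ζ ≠ χ) (z : ℂ) (p : ℝ) :
    superpos ζ χ z p
      = (Real.sqrt p : ℂ) • Pi.single ζ 1 + (z * Real.sqrt (1 - p)) • Pi.single χ 1 := by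
  funext ε
  by_cases hζ : ε = ζ
  · subst hζ; simp [superpos, hne]
  · by_cases hχ : ε = χ
    · subst hχ; simp [superpos, hζ]
    · simp [superpos, hζ, hχ]

variable [Fintype Λ]

lemma qdot_single_left (ε : Λ) (y : Λ → ℂ) : qdot (Pi.single ε 1) y = y ε := by
  simp [qdot_eq_star_dotProduct]

lemma qdot_smul_add_smul_map (L : (Λ → ℂ) →ₗ[ℂ] (Λ → ℂ)) (a b : ℂ) (ζ χ : Λ) :
    qdot (a • Pi.single ζ 1 + b • Pi.single χ 1) (L (a • Pi.single ζ 1 + b • Pi.single χ 1))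
      = star a * a * L (Pi.single ζ 1) ζ + star a * b * L (Pi.single χ 1) ζ
        + star b * a * L (Pi.single ζ 1) χ + star b * b * L (Pi.single χ 1) χ := by
  simp [qdot_eq_star_dotProduct, add_dotProduct, dotProduct_add]
  ring

lemma qdot_superpos_map (L : (Λ → ℂ) →ₗ[ℂ] (Λ → ℂ)) {ζ χ : Λ} (hne : ζ ≠ χ) {z : ℂ}
    (hz : ‖z‖ = 1) {p : ℝ} (hp : p ∈ Set.Icc (0 : ℝ) 1) :
    qdot (superpos ζ χ z p) (L (superpos ζ χ z p))
      = p * L (Pi.single ζ 1) ζ + (1 - p) * L (Pi.single χ 1) χ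
        + Real.sqrt (p * (1 - p)) * (z * L (Pi.single χ 1) ζ + star z * L (Pi.single ζ 1) χ) := by
  have hzz : starRingEnd ℂ z * z = 1 := by
    rw [mul_comm, Complex.mul_conj, Complex.normSq_eq_norm_sq, hz]
    norm_num
  have hp' : (Real.sqrt p : ℂ) * Real.sqrt p = p := by
    exact_mod_cast Real.mul_self_sqrt hp.1
  have hq' : (Real.sqrt (1 - p) : ℂ) * Real.sqrt (1 - p) = 1 - p := by
    exact_mod_cast Real.mul_self_sqrt (sub_nonneg.2 hp.2)
  rw [superpos_eq hne, qdot_smul_add_smul_map, Real.sqrt_mul hp.1]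
  simp only [star_mul', Complex.star_def, Complex.conj_ofReal]
  push_cast
  linear_combination L (Pi.single ζ 1) ζ * hp'
    + (1 - p) * L (Pi.single χ 1) χ * hzz + starRingEnd ℂ z * z * L (Pi.single χ 1) χ * hq'

lemma qdot_superpos_self {ζ χ : Λ} (hne : ζ ≠ χ) {z : ℂ} (hz : ‖z‖ = 1) {p : ℝ}
    (hp : p ∈ Set.Icc (0 : ℝ) 1) : qdot (superpos ζ χ z p) (superpos ζ χ z p) = 1 := by
  simpa [hne, hne.symm] using qdot_superpos_map LinearMap.id hne hz hp

lemma qdot_superpos_half_map (L : (Λ → ℂ) →ₗ[ℂ] (Λ → ℂ)) {ζ χ : Λ} (hne : ζ ≠ χ) {z : ℂ}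
    (hz : ‖z‖ = 1) :
    qdot (superpos ζ χ z (1 / 2)) (L (superpos ζ χ z (1 / 2)))
      = (L (Pi.single ζ 1) ζ + L (Pi.single χ 1) χ
        + (z * L (Pi.single χ 1) ζ + star z * L (Pi.single ζ 1) χ)) / 2 := by
  have hsqrt : Real.sqrt (1 / 2 * (1 - 1 / 2)) = 1 / 2 := by
    rw [show (1 / 2 * (1 - 1 / 2) : ℝ) = (1 / 2) ^ 2 by norm_num]
    exact Real.sqrt_sq (by norm_num)
  rw [qdot_superpos_map L hne hz (by norm_num), hsqrt]
  push_cast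
  ring

lemma single_apply_eq_zero_of_qdot_superpos_half {L : (Λ → ℂ) →ₗ[ℂ] (Λ → ℂ)} {ζ χ : Λ}
    (hne : ζ ≠ χ) (hζ : L (Pi.single ζ 1) ζ = 1) (hχ : L (Pi.single χ 1) χ = 0)
    (h : ∀ z : ℂ, ‖z‖ = 1 →
      qdot (superpos ζ χ z (1 / 2)) (L (superpos ζ χ z (1 / 2))) = ((1 / 2 : ℝ) : ℂ)) :
    L (Pi.single χ 1) ζ = 0 ∧ L (Pi.single ζ 1) χ = 0 := by
  refine Complex.eq_zero_of_forall_norm_eq_one fun z hz => ?_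
  have hz' := h z hz
  rw [qdot_superpos_half_map L hne hz, hζ, hχ] at hz'
  push_cast at hz'
  linear_combination 2 * hz'

lemma single_apply_eq_zero_of_diag_eq {L : (Λ → ℂ) →ₗ[ℂ] (Λ → ℂ)} {ζ χ : Λ} (hne : ζ ≠ χ)
    {d : ℝ} (hd : d = 0 ∨ d = 1) (hζ : L (Pi.single ζ 1) ζ = d) (hχ : L (Pi.single χ 1) χ = d)
    (hrange : ∀ ψ : Λ → ℂ, qdot ψ ψ = 1 → ∃ r : ℝ, qdot ψ (L ψ) = (r : ℂ) ∧ 0 ≤ r ∧ r ≤ 1) :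
    L (Pi.single χ 1) ζ = 0 ∧ L (Pi.single ζ 1) χ = 0 := by
  refine Complex.eq_zero_of_forall_norm_eq_one_of_mem_Icc hd fun z hz => ?_
  obtain ⟨r, hr, hr0, hr1⟩ := hrange _ (qdot_superpos_self hne hz (by norm_num : (1 / 2 : ℝ) ∈ _))
  refine ⟨r, hr0, hr1, ?_⟩
  rw [← hr, qdot_superpos_half_map L hne hz, hζ, hχ]
  ring

end QuadraticForm

section PointMass

variable {E : Type} [Fintype E]

lemma prod_ite_apply_eq_ite_eq {R : Type} [CommMonoidWithZero R] (ε ε' : E → Bool) :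
    (∏ e, if ε' e = ε e then (1 : R) else 0) = if ε' = ε then 1 else 0 := by
  rw [Finset.prod_boole]
  simp [funext_iff]

lemma stProb_indicator (ε ε' : E → Bool) :
    stProb (fun e => if ε e then 1 else 0) ε' = if ε' = ε then 1 else 0 := by
  rw [stProb, ← prod_ite_apply_eq_ite_eq]
  refine Finset.prod_congr rfl fun e _ => ?_
  cases ε e <;> cases ε' e <;> simp

lemma relOf_indicator (ε : E → Bool) (Conn : (E → Bool) → Prop) :
    relOf (fun e => if ε e then 1 else 0) Conn = if Conn ε then 1 else 0 := by
  rw [relOf, Finset.sum_eq_single ε (fun ε' _ h => by simp [stProb_indicator, h]) (by simp)]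
  simp [stProb_indicator]

lemma prod_sqrt_indicator_eq_single (ε : E → Bool) :
    (fun ε' : E → Bool => ∏ e, if ε' e then (Real.sqrt (if ε e then 1 else 0) : ℂ)
        else 1 * Real.sqrt (1 - if ε e then 1 else 0)) = Pi.single ε 1 := by
  funext ε'
  rw [Pi.single_apply, ← prod_ite_apply_eq_ite_eq]
  refine Finset.prod_congr rfl fun e _ => ?_
  cases ε e <;> cases ε' e <;> simp

end PointMass

theorem qr_operator_unique_general {V E : Type} [Fintype E] (s t : E → V)
    (L : ((E → Bool) → ℂ) →ₗ[ℂ] ((E → Bool) → ℂ))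
    (hrange : ∀ ψ : (E → Bool) → ℂ, qdot ψ ψ = 1 →
        ∃ r : ℝ, qdot ψ (L ψ) = (r : ℂ) ∧ 0 ≤ r ∧ r ≤ 1)
    (hext : ∀ (p : E → ℝ) (z : E → ℂ), (∀ e, p e ∈ Set.Icc (0:ℝ) 1) →
        (∀ e, ‖z e‖ = 1) →
        qdot (fun ε : E → Bool =>
            ∏ e, if ε e then (Real.sqrt (p e) : ℂ) else z e * Real.sqrt (1 - p e))
          (L (fun ε : E → Bool =>
            ∏ e, if ε e then (Real.sqrt (p e) : ℂ) else z e * Real.sqrt (1 - p e)))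
          = (relOf p (ConnectedState Set.univ s t) : ℂ))
    (hent : ∀ (ζ χ : E → Bool) (z : ℂ) (p : ℝ),
        ConnectedState Set.univ s t ζ → ¬ ConnectedState Set.univ s t χ →
        ‖z‖ = 1 → p ∈ Set.Icc (0:ℝ) 1 →
        qdot (fun ε : E → Bool =>
            if ε = ζ then (Real.sqrt p : ℂ)
            else if ε = χ then z * Real.sqrt (1 - p) else 0)
          (L (fun ε : E → Bool =>
            if ε = ζ then (Real.sqrt p : ℂ)
            else if ε = χ then z * Real.sqrt (1 - p) else 0))
          = (p : ℂ)) :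
    L = projC {ε : E → Bool | ConnectedState Set.univ s t ε} := by
  set Conn := ConnectedState Set.univ s t
  have hdiag : ∀ ε, L (Pi.single ε 1) ε = if Conn ε then 1 else 0 := by
    intro ε
    have h := hext (fun e => if ε e then 1 else 0) (fun _ => 1)
      (fun e => by split_ifs <;> simp) (fun _ => norm_one)
    rw [prod_sqrt_indicator_eq_single, qdot_single_left, relOf_indicator] at h
    rw [h]
    split_ifs <;> simp
  have hoff : ∀ ζ χ, ζ ≠ χ → L (Pi.single χ 1) ζ = 0 ∧ L (Pi.single ζ 1) χ = 0 := by
    intro ζ χ hne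
    by_cases hcon : Conn ζ ↔ Conn χ
    · by_cases hζ : Conn ζ
      · exact single_apply_eq_zero_of_diag_eq hne (d := 1) (by simp)
          (by simp [hdiag, hζ]) (by simp [hdiag, hcon.1 hζ]) hrange
      · exact single_apply_eq_zero_of_diag_eq hne (d := 0) (by simp)
          (by simp [hdiag, hζ]) (by simp [hdiag, mt hcon.2 hζ]) hrange
    · wlog hζ : Conn ζ generalizing ζ χ
      · exact (this χ ζ hne.symm (by tauto) (by tauto)).symm
      have hχ : ¬ Conn χ := by tauto
      exact single_apply_eq_zero_of_qdot_superpos_half hne (by simp [hdiag, hζ])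
        (by simp [hdiag, hχ]) fun z hz => hent ζ χ z (1 / 2) hζ hχ hz (by norm_num)
  refine Module.Basis.ext (Pi.basisFun ℂ _) fun χ => funext fun ζ => ?_
  rw [Pi.basisFun_apply]
  rcases eq_or_ne ζ χ with rfl | hne
  · simp [projC, hdiag]
  · simp [projC, (hoff ζ χ hne).1, hne]

/-- uniqueness of the quantum reliability operator.  A self-adjoint
operator with quadratic form in `[0,1]` on unit vectors satisfying the extension
axiom and the entanglement axiom is the projection onto the span of connected states. -/
theorem qr_operator_unique {V E : Type} [Fintype V] [Fintype E] (s t : E → V)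
    (L : ((E → Bool) → ℂ) →ₗ[ℂ] ((E → Bool) → ℂ))
    (hsa : ∀ x y : (E → Bool) → ℂ, qdot (L x) y = qdot x (L y))
    (hrange : ∀ ψ : (E → Bool) → ℂ, qdot ψ ψ = 1 →
        ∃ r : ℝ, qdot ψ (L ψ) = (r : ℂ) ∧ 0 ≤ r ∧ r ≤ 1)
    (hext : ∀ (p : E → ℝ) (z : E → ℂ), (∀ e, p e ∈ Set.Icc (0:ℝ) 1) →
        (∀ e, ‖z e‖ = 1) →
        qdot (fun ε : E → Bool =>
            ∏ e, if ε e then (Real.sqrt (p e) : ℂ) else z e * Real.sqrt (1 - p e))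
          (L (fun ε : E → Bool =>
            ∏ e, if ε e then (Real.sqrt (p e) : ℂ) else z e * Real.sqrt (1 - p e)))
          = (relOf p (ConnectedState Set.univ s t) : ℂ))
    (hent : ∀ (ζ χ : E → Bool) (z : ℂ) (p : ℝ),
        ConnectedState Set.univ s t ζ → ¬ ConnectedState Set.univ s t χ →
        ‖z‖ = 1 → p ∈ Set.Icc (0:ℝ) 1 →
        qdot (fun ε : E → Bool =>
            if ε = ζ then (Real.sqrt p : ℂ)
            else if ε = χ then z * Real.sqrt (1 - p) else 0)
          (L (fun ε : E → Bool =>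
            if ε = ζ then (Real.sqrt p : ℂ)
            else if ε = χ then z * Real.sqrt (1 - p) else 0))
          = (p : ℂ)) :
    L = projC {ε : E → Bool | ConnectedState Set.univ s t ε} :=
  qr_operator_unique_general s t L hrange hext hent
end
end

section
/- On the lattice Γ(U) of partitions of a finite set U ordered by refinement, define α_{γ,γ'} = 1 if the meet γ ∧ γ' (the common coarsening) has exactly one block, and α_{γ,γ'} = 0 otherwise. Then the matrix M = (α_{γ,γ'}) indexed by Γ(U) × Γ(U) is invertible. -/
/-!
On a finite join-semilattice, if `f x = ∑_{y ≥ x} g y` then the matrix `(f (x ⊔ y))` factors as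
`Z * diagonal g * Zᵀ`, where the zeta matrix `Z` is unitriangular for any linear extension; so
it is invertible as soon as `g` vanishes nowhere. For `f` the indicator of the one-block
partition `⊤`, `g σ` is the Möbius value `μ(σ, ⊤) = (-1)^(k-1) (k-1)!`, `k` the number of blocks
of `σ`. To see that this `g` works, count the maps `B → Fin x` by their kernels:
`∑_π x(x-1)⋯(x-|π|+1) = x^|B|`, a polynomial identity whose derivative at `0` gives
`∑_π μ(π, ⊤) = [|B| = 1]`; apply it to `B = U/σ`, whose partitions are those of `U` above `σ`.
-/
open scoped Classical
noncomputable section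

open Polynomial Matrix

namespace Matrix

def zeta (α R : Type*) [LE α] [Zero R] [One R] : Matrix α α R :=
  of fun x y => if x ≤ y then 1 else 0

variable {α R : Type*} [Fintype α]

theorem det_zeta [PartialOrder α] [CommRing R] : (zeta α R).det = 1 := by
  let e : α ≃ LinearExtension α := Equiv.refl α
  let _ : Fintype (LinearExtension α) := ‹Fintype α›
  have hupper : (reindex e e (zeta α R)).IsUpperTriangular := by
    intro i j hji
    have hij : ¬ (e.symm i ≤ e.symm j) := fun h => (toLinearExtension.monotone h).not_gt hji
    simp [zeta, hij]
  rw [← det_reindex_self e, det_of_isUpperTriangular hupper]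
  simp [zeta]

theorem isUnit_zeta [PartialOrder α] [CommRing R] : IsUnit (zeta α R) := by
  rw [isUnit_iff_isUnit_det, det_zeta]
  exact isUnit_one

theorem of_sup_eq_zeta_mul_diagonal_mul_transpose [SemilatticeSup α] [Semiring R]
    (f g : α → R) (hfg : ∀ x, f x = ∑ y with x ≤ y, g y) :
    of (fun x y => f (x ⊔ y)) = zeta α R * diagonal g * (zeta α R)ᵀ := by
  ext x y
  rw [mul_apply]
  simp only [of_apply, mul_diagonal, transpose_apply, zeta, hfg, Finset.sum_filter, sup_le_iff]
  refine Finset.sum_congr rfl fun z _ => ?_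
  by_cases hx : x ≤ z <;> by_cases hy : y ≤ z <;> simp [hx, hy]

theorem isUnit_of_apply_sup [SemilatticeSup α] [CommRing R] (f g : α → R)
    (hfg : ∀ x, f x = ∑ y with x ≤ y, g y) (hg : ∀ x, IsUnit (g x)) :
    IsUnit (of fun x y => f (x ⊔ y)) := by
  rw [of_sup_eq_zeta_mul_diagonal_mul_transpose f g hfg]
  refine (isUnit_zeta.mul ?_).mul ((isUnit_transpose _).mpr isUnit_zeta)
  exact isUnit_diagonal.mpr (Pi.isUnit_iff.mpr hg)

end Matrix

section Partitions

open scoped Nat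

-- The Möbius value `μ(σ, ⊤)` of the partition lattice, for a partition `σ` with `k` blocks.
def partitionMoebius (R : Type*) [CommRing R] (k : ℕ) : R :=
  (derivative (descPochhammer R k)).eval 0

theorem partitionMoebius_succ (R : Type*) [CommRing R] (k : ℕ) :
    partitionMoebius R (k + 1) = (-1) ^ k * (k ! : R) := by
  induction k with
  | zero => simp [partitionMoebius]
  | succ k ih =>
    rw [partitionMoebius, descPochhammer_succ_right, derivative_mul, eval_add, eval_mul, eval_mul,
      ← partitionMoebius, ih, descPochhammer_ne_zero_eval_zero R k.succ_ne_zero]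
    simp only [eval_sub, eval_X, eval_natCast, zero_mul, add_zero, Nat.factorial_succ, Nat.cast_mul]
    ring

namespace Setoid

def kerEqEquivEmbedding {B : Type*} (X : Type*) (π : Setoid B) :
    {f : B → X // ker f = π} ≃ (Quotient π ↪ X) :=
  (Equiv.subtypeSubtypeEquivSubtype (p := fun f => π ≤ ker f) fun h => h.ge).symm.trans <|
    (Equiv.subtypeEquiv (liftEquiv π) fun f => (lift_injective_iff_ker_eq_of_le f.2).symm).trans <|
      Equiv.subtypeInjectiveEquivEmbedding _ _

theorem sum_descFactorial_card_quotient (B : Type) [Finite B] (x : ℕ) :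
    ∑ π : Setoid B, x.descFactorial (Nat.card (Quotient π)) = x ^ Nat.card B := by
  cases nonempty_fintype B
  have hfiber (π : Setoid B) :
      x.descFactorial (Nat.card (Quotient π)) = Nat.card {f : B → Fin x // ker f = π} := by
    rw [Nat.card_congr (kerEqEquivEmbedding (Fin x) π),
      Nat.card_eq_fintype_card (α := Quotient π ↪ Fin x), Fintype.card_embedding_eq,
      Fintype.card_fin, Nat.card_eq_fintype_card]
  calc ∑ π : Setoid B, x.descFactorial (Nat.card (Quotient π))
      = Nat.card (Σ π : Setoid B, {f : B → Fin x // ker f = π}) := by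
        simp only [hfiber, Nat.card_sigma]
    _ = Nat.card (B → Fin x) := Nat.card_congr (Equiv.sigmaFiberEquiv ker)
    _ = x ^ Nat.card B := by simp

theorem sum_descPochhammer_card_quotient (R : Type*) [CommRing R] [IsDomain R] [CharZero R]
    (B : Type) [Finite B] :
    ∑ π : Setoid B, descPochhammer R (Nat.card (Quotient π)) = X ^ Nat.card B := by
  refine sub_eq_zero.mp (eq_zero_of_infinite_isRoot _
    ((Set.infinite_range_of_injective Nat.cast_injective).mono ?_))
  rintro _ ⟨x, rfl⟩
  simp only [Set.mem_ofPred_eq, IsRoot, eval_sub, eval_finsetSum,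
    descPochhammer_eval_eq_descFactorial, eval_pow, eval_X, sub_eq_zero]
  exact_mod_cast sum_descFactorial_card_quotient B x

theorem sum_partitionMoebius_card_quotient (R : Type*) [CommRing R] [IsDomain R] [CharZero R]
    (B : Type) [Finite B] :
    ∑ π : Setoid B, partitionMoebius R (Nat.card (Quotient π)) =
      if Nat.card B = 1 then 1 else 0 := by
  have h := congrArg (fun p => (derivative p).eval 0) (sum_descPochhammer_card_quotient R B)
  simp only [map_sum, eval_finsetSum, derivative_X_pow, eval_mul, eval_pow, eval_X] at h
  unfold partitionMoebius
  rw [h, eval_C]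
  rcases Nat.card B with _ | _ | n <;> simp

theorem card_quotient_comap_of_surjective {α β : Type*} {f : α → β}
    (hf : Function.Surjective f) (r : Setoid β) :
    Nat.card (Quotient (r.comap f)) = Nat.card (Quotient r) := by
  simp [Nat.card_congr (comapQuotientEquiv f r), hf.range_comp]

theorem sum_le_eq_sum_quotient {U : Type} [Finite U] {M : Type*} [AddCommMonoid M]
    (σ : Setoid U) (g : ℕ → M) :
    ∑ τ with σ ≤ τ, g (Nat.card (Quotient τ)) =
      ∑ π : Setoid (Quotient σ), g (Nat.card (Quotient π)) := by
  rw [Finset.sum_subtype _ (p := (σ ≤ ·)) (fun τ => by simp)]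
  exact (Fintype.sum_equiv (correspondence σ).symm.toEquiv _ _ fun π =>
    by rw [← card_quotient_comap_of_surjective Quotient.mk'_surjective]; rfl).symm

theorem card_quotient_eq_one_iff {U : Type*} [Nonempty U] (σ : Setoid U) :
    Nat.card (Quotient σ) = 1 ↔ σ = ⊤ := by
  rw [Nat.card_eq_one_iff_unique, Quotient.subsingleton_iff]
  exact and_iff_left (Nonempty.map (Quotient.mk σ) ‹_›)

theorem sum_le_partitionMoebius_card_quotient (R : Type*) [CommRing R] [IsDomain R] [CharZero R]
    {U : Type} [Finite U] [Nonempty U] (σ : Setoid U) :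
    ∑ τ with σ ≤ τ, partitionMoebius R (Nat.card (Quotient τ)) = if σ = ⊤ then 1 else 0 := by
  simp only [sum_le_eq_sum_quotient, sum_partitionMoebius_card_quotient, card_quotient_eq_one_iff]

end Setoid

end Partitions

/-- the connectivity matrix of the partition lattice of a finite
nonempty set is invertible. -/
theorem connectivity_matrix_invertible (U : Type) [Finite U] [Nonempty U] :
    IsUnit (connMatrix U) := by
  refine isUnit_of_apply_sup (fun σ => if σ = ⊤ then 1 else 0)
    (fun σ => partitionMoebius ℝ (Nat.card (Quotient σ)))
    (fun σ => (Setoid.sum_le_partitionMoebius_card_quotient ℝ σ).symm) fun σ => ?_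
  obtain ⟨k, hk⟩ := Nat.exists_eq_succ_of_ne_zero (Nat.card_ne_zero.mpr
    ⟨Nonempty.map (Quotient.mk σ) ‹_›, inferInstance⟩)
  simp [hk, partitionMoebius_succ, Nat.factorial_ne_zero]
end
end

section
/- Let G be a finite graph that is the union of subgraphs K and H sharing only the vertex set U = V(K) ∩ V(H), so that E(G) = E(K) ⊔ E(H). Then a state ε = (ε_K, ε_H) of G is connected if and only if ε_H has no islands and the state ε_K is connected in the quotient graph K/P(ε_H). Equivalently, C(G) = ⋃_{ε ∈ Λ̂_H} C(K/P(ε)) × {ε}, a disjoint union. -/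
open scoped Classical
noncomputable section

/-!
Contract every maximal stretch of H-edges of a walk in G: a stretch joining two vertices of
`U` is exactly an identification made by `P(ε_H)`, so a walk in G between vertices of K becomes
a walk in `K/P(ε_H)`, and a walk leaving a vertex of H must reach `U` through H-edges alone
(no islands). Conversely, every identification in `K/P(ε_H)` is realised by a path in `ε_H`.
-/

open Relation

theorem Relation.EqvGen.pred_iff_of_symm {α : Type*} {r : α → α → Prop} [Std.Symm r]
    {P : α → Prop} (hP : ∀ a b, r a b → P b → P a) {a b : α} (h : EqvGen r a b) :
    P a ↔ P b := by
  induction h with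
  | rel a b hab => exact ⟨hP b a (Std.Symm.symm a b hab), hP a b hab⟩
  | refl => exact Iff.rfl
  | symm _ _ _ ih => exact ih.symm
  | trans _ _ _ _ _ ih₁ ih₂ => exact ih₁.trans ih₂

section Graph

variable {V E : Type} {s t : E → V} {ε : E → Bool}

instance edgeAdj.instSymm : Std.Symm (edgeAdj s t ε) :=
  ⟨fun _ _ ⟨e, he, h⟩ => ⟨e, he, h.symm⟩⟩

theorem edgeAdj.mem {S : Set V} (hS : ∀ e, s e ∈ S ∧ t e ∈ S) {x y : V}
    (h : edgeAdj s t ε x y) : x ∈ S ∧ y ∈ S := by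
  obtain ⟨e, -, ⟨rfl, rfl⟩ | ⟨rfl, rfl⟩⟩ := h
  exacts [hS e, (hS e).symm]

def edgeAdjMod (s t : E → V) (σ : V → V → Prop) (ε : E → Bool) (a b : V) : Prop :=
  edgeAdj s t ε a b ∨ σ a b

theorem connectedModOn_iff {S : Set V} {σ : V → V → Prop} :
    ConnectedModOn S s t σ ε ↔ ∀ x ∈ S, ∀ y ∈ S, EqvGen (edgeAdjMod s t σ ε) x y :=
  Iff.rfl

theorem connectedState_iff {S : Set V} :
    ConnectedState S s t ε ↔ ∀ x ∈ S, ∀ y ∈ S, EqvGen (edgeAdj s t ε) x y := by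
  simp only [ConnectedState, ConnectedModOn, or_false]

end Graph

section Union

variable {V EK EH : Type} {VK VH : Set V} {sK tK : EK → V} {sH tH : EH → V}
  {εK : EK → Bool} {εH : EH → Bool}

theorem edgeAdj_sumElim_iff {x y : V} :
    edgeAdj (Sum.elim sK sH) (Sum.elim tK tH) (Sum.elim εK εH) x y ↔
      edgeAdj sK tK εK x y ∨ edgeAdj sH tH εH x y := by
  simp only [edgeAdj, Sum.exists, Sum.elim_inl, Sum.elim_inr]

theorem eqvGen_sumElim_of_eqvGen_right {x y : V} (h : EqvGen (edgeAdj sH tH εH) x y) :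
    EqvGen (edgeAdj (Sum.elim sK sH) (Sum.elim tK tH) (Sum.elim εK εH)) x y :=
  EqvGen.mono (fun _ _ hab => edgeAdj_sumElim_iff.2 (.inr hab)) _ _ h

theorem eqvGen_sumElim_of_eqvGen_edgeAdjMod {x y : V}
    (h : EqvGen (edgeAdjMod sK tK (partRel (VK ∩ VH) (inducedPart (VK ∩ VH) sH tH εH)) εK)
      x y) :
    EqvGen (edgeAdj (Sum.elim sK sH) (Sum.elim tK tH) (Sum.elim εK εH)) x y := by
  refine EqvGen.eqvGen_le (fun a b hab => ?_) _ _ h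
  rcases hab with hk | ⟨_, _, hh⟩
  · exact .rel _ _ (edgeAdj_sumElim_iff.2 (.inl hk))
  · exact eqvGen_sumElim_of_eqvGen_right hh

theorem eqvGen_edgeAdjMod_of_eqvGen_sumElim (hK : ∀ e, sK e ∈ VK ∧ tK e ∈ VK)
    (hH : ∀ e, sH e ∈ VH ∧ tH e ∈ VH) {x y : V} (hy : y ∈ VK)
    (h : EqvGen (edgeAdj (Sum.elim sK sH) (Sum.elim tK tH) (Sum.elim εK εH)) x y) :
    let R := edgeAdjMod sK tK (partRel (VK ∩ VH) (inducedPart (VK ∩ VH) sH tH εH)) εK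
    (x ∈ VK → EqvGen R x y) ∧
      (x ∈ VH → ∃ u ∈ VK ∩ VH, EqvGen (edgeAdj sH tH εH) x u ∧ EqvGen R u y) := by
  intro R
  apply (EqvGen.pred_iff_of_symm ?_ h).2
  · exact ⟨fun _ => .refl _, fun hyH => ⟨y, ⟨hy, hyH⟩, .refl _, .refl _⟩⟩
  rintro a c hac ⟨hcK, hcH⟩
  rcases edgeAdj_sumElim_iff.1 hac with hac | hac
  · obtain ⟨haK, hcK'⟩ := edgeAdj.mem hK hac
    have hay : EqvGen R a y := .trans _ _ _ (.rel _ _ (.inl hac)) (hcK hcK')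
    exact ⟨fun _ => hay, fun haH => ⟨a, ⟨haK, haH⟩, .refl _, hay⟩⟩
  · obtain ⟨haH, hcH'⟩ := edgeAdj.mem hH hac
    obtain ⟨u, hu, hcu, huy⟩ := hcH hcH'
    have hau : EqvGen (edgeAdj sH tH εH) a u := .trans _ _ _ (.rel _ _ hac) hcu
    exact ⟨fun haK => .trans _ _ _ (.rel _ _ (.inr ⟨⟨haK, haH⟩, hu, hau⟩)) huy,
      fun _ => ⟨u, hu, hau, huy⟩⟩

theorem eqvGen_sumElim_of_noIslands (hcover : VK ∪ VH = Set.univ) {u₀ : V}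
    (hislands : NoIslands VH (VK ∩ VH) sH tH εH)
    (hquot : ∀ x ∈ VK, EqvGen
      (edgeAdjMod sK tK (partRel (VK ∩ VH) (inducedPart (VK ∩ VH) sH tH εH)) εK) x u₀)
    (x : V) : EqvGen (edgeAdj (Sum.elim sK sH) (Sum.elim tK tH) (Sum.elim εK εH)) x u₀ := by
  rcases hcover.symm ▸ Set.mem_univ x with hx | hx
  · exact eqvGen_sumElim_of_eqvGen_edgeAdjMod (hquot x hx)
  · obtain ⟨u, hu, hxu⟩ := hislands x hx
    exact (eqvGen_sumElim_of_eqvGen_right hxu).trans _ _ _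
      (eqvGen_sumElim_of_eqvGen_edgeAdjMod (hquot u hu.1))

end Union

theorem connected_union_characterization_general {V EK EH : Type}
    (VK VH : Set V) (hcover : VK ∪ VH = Set.univ) (hU : (VK ∩ VH).Nonempty)
    (sK tK : EK → V) (hK : ∀ e, sK e ∈ VK ∧ tK e ∈ VK)
    (sH tH : EH → V) (hH : ∀ e, sH e ∈ VH ∧ tH e ∈ VH)
    (εK : EK → Bool) (εH : EH → Bool) :
    ConnectedState Set.univ (Sum.elim sK sH) (Sum.elim tK tH) (Sum.elim εK εH)
      ↔ (NoIslands VH (VK ∩ VH) sH tH εH ∧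
          ConnectedModOn VK sK tK
            (partRel (VK ∩ VH) (inducedPart (VK ∩ VH) sH tH εH)) εK) := by
  obtain ⟨u₀, hu₀⟩ := hU
  rw [connectedState_iff, connectedModOn_iff]
  constructor
  · intro hG
    refine ⟨fun x hx => ?_, fun x hx y hy => ?_⟩
    · obtain ⟨u, hu, hxu, -⟩ :=
        (eqvGen_edgeAdjMod_of_eqvGen_sumElim hK hH hu₀.1 (hG x trivial u₀ trivial)).2 hx
      exact ⟨u, hu, hxu⟩
    · exact (eqvGen_edgeAdjMod_of_eqvGen_sumElim hK hH hy (hG x trivial y trivial)).1 hx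
  · rintro ⟨hislands, hquot⟩
    have hG₀ := eqvGen_sumElim_of_noIslands hcover hislands fun x hx => hquot x hx u₀ hu₀.1
    exact fun x _ y _ => (hG₀ x).trans _ _ _ ((hG₀ y).symm _ _)

/-- a state `(ε_K, ε_H)` of the union `G = K ∪ H` sharing only the
vertices `U = V(K) ∩ V(H)` is connected iff `ε_H` has no islands and `ε_K` is
connected in the quotient graph `K/P(ε_H)`. -/
theorem connected_union_characterization {V EK EH : Type}
    [Fintype V] [Fintype EK] [Fintype EH]
    (VK VH : Set V) (hcover : VK ∪ VH = Set.univ) (hU : (VK ∩ VH).Nonempty)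
    (sK tK : EK → V) (hK : ∀ e, sK e ∈ VK ∧ tK e ∈ VK)
    (sH tH : EH → V) (hH : ∀ e, sH e ∈ VH ∧ tH e ∈ VH)
    (εK : EK → Bool) (εH : EH → Bool) :
    ConnectedState Set.univ (Sum.elim sK sH) (Sum.elim tK tH) (Sum.elim εK εH)
      ↔ (NoIslands VH (VK ∩ VH) sH tH εH ∧
          ConnectedModOn VK sK tK
            (partRel (VK ∩ VH) (inducedPart (VK ∩ VH) sH tH εH)) εK) :=
  connected_union_characterization_general VK VH hcover hU sK tK hK sH tH hH εK εH
end
end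

section
/- Let G be a finite graph that is the union of graphs K and H sharing only the vertices U. Then the quantum reliability operator decomposes as Q̂R_G = Σ_{γ ∈ Γ(U)} Q̂R_{K/γ} ⊗ Ô_γ, where Ô_γ is the orthogonal projection of ℓ²_ℂ(Λ_H) onto the span of states with no islands whose induced partition of U equals γ, under the identification ℓ²_ℂ(Λ_G) ≅ ℓ²_ℂ(Λ_K) ⊗ ℓ²_ℂ(Λ_H). -/
open scoped Classical
noncomputable section

/-! Let `U = VK ∩ VH`. If `G` is connected in the state `(εK, εH)`, every `H`-component of a
vertex of `VH` meets `U`: a component missing `U` misses `VK`, so no edge of `G` leaves it.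
Retracting each vertex outside `VK` onto a vertex of `U` in its `H`-component then maps paths of
`G` to paths of `K/P(εH)`; conversely, `H`-paths lift the identifications of `K/P(εH)` to `G`.
So `(εK, εH)` is connected iff `εH` has no islands and `εK` is connected in `K/P(εH)`. All
operators involved are diagonal projections, and for a given state only `γ = P(εH)` contributes
to the sum. -/

open Relation

namespace Relation.EqvGen

variable {α β : Type*} {r : α → α → Prop} {a b : α}

theorem mem_iff_mem {S : Set α} (hS : ∀ a b, r a b → (a ∈ S ↔ b ∈ S)) (h : EqvGen r a b) :
    a ∈ S ↔ b ∈ S :=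
  (Equivalence.comap ⟨fun _ => Iff.rfl, Iff.symm, Iff.trans⟩ (· ∈ S)).eqvGen_iff.mp
    (EqvGen.mono hS _ _ h)

theorem map {s : β → β → Prop} {f : α → β} (hf : ∀ a b, r a b → EqvGen s (f a) (f b))
    (h : EqvGen r a b) : EqvGen s (f a) (f b) :=
  ((EqvGen.is_equivalence s).comap f).eqvGen_iff.mp (EqvGen.mono hf _ _ h)

end Relation.EqvGen

section Gluing

variable {V : Type*} {VK VH : Set V} {RK RH : V → V → Prop}

/-- Adjacency of `K/γ`, where `γ` is the partition of `U` cut out by the components of `RH`. -/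
def gluedAdj (U : Set V) (RK RH : V → V → Prop) (a b : V) : Prop :=
  RK a b ∨ (a ∈ U ∧ b ∈ U ∧ EqvGen RH a b)

theorem exists_eqvGen_mem_inter_of_connected (hU : (VK ∩ VH).Nonempty)
    (hK : ∀ a b, RK a b → a ∈ VK ∧ b ∈ VK) (hH : ∀ a b, RH a b → a ∈ VH ∧ b ∈ VH)
    (hconn : ∀ x y, EqvGen (RK ⊔ RH) x y) :
    ∀ x ∈ VH, ∃ u ∈ VK ∩ VH, EqvGen RH x u := by
  intro x hx
  by_contra! hisland
  have hcomp_VH : ∀ a, EqvGen RH x a → a ∈ VH := fun a hxa =>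
    (hxa.mem_iff_mem fun a b hab => iff_of_true (hH a b hab).1 (hH a b hab).2).mp hx
  have hcomp_not_VK : ∀ a, EqvGen RH x a → a ∉ VK := fun a hxa haK =>
    hisland a ⟨haK, hcomp_VH a hxa⟩ hxa
  have hclosed : ∀ a b, (RK ⊔ RH) a b →
      (a ∈ {c | EqvGen RH x c} ↔ b ∈ {c | EqvGen RH x c}) := by
    rintro a b (hab | hab)
    · exact iff_of_false (fun hxa => hcomp_not_VK a hxa (hK a b hab).1)
        (fun hxb => hcomp_not_VK b hxb (hK a b hab).2)
    · exact ⟨fun hxa => hxa.trans _ _ _ (.rel _ _ hab),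
        fun hxb => hxb.trans _ _ _ (.symm _ _ (.rel _ _ hab))⟩
  obtain ⟨u, hu⟩ := hU
  exact hisland u hu (((hconn x u).mem_iff_mem hclosed).mp (.refl x))

theorem eqvGen_glued_of_connected (hcover : VK ∪ VH = Set.univ)
    (hK : ∀ a b, RK a b → a ∈ VK ∧ b ∈ VK) (hH : ∀ a b, RH a b → a ∈ VH ∧ b ∈ VH)
    (hnoIslands : ∀ x ∈ VH, ∃ u ∈ VK ∩ VH, EqvGen RH x u)
    (hconn : ∀ x y, EqvGen (RK ⊔ RH) x y) :
    ∀ x ∈ VK, ∀ y ∈ VK, EqvGen (gluedAdj (VK ∩ VH) RK RH) x y := by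
  have hretract : ∀ v, ∃ w, (v ∈ VK → w = v) ∧ (v ∈ VH → w ∈ VK ∩ VH ∧ EqvGen RH v w) := by
    intro v
    by_cases hv : v ∈ VK
    · exact ⟨v, fun _ => rfl, fun hvH => ⟨⟨hv, hvH⟩, .refl v⟩⟩
    · have hvH : v ∈ VH := (Set.eq_univ_iff_forall.mp hcover v).resolve_left hv
      obtain ⟨u, hu, hvu⟩ := hnoIslands v hvH
      exact ⟨u, fun h => absurd h hv, fun _ => ⟨hu, hvu⟩⟩
  choose ρ hρK hρH using hretract
  have hstep : ∀ a b, (RK ⊔ RH) a b → EqvGen (gluedAdj (VK ∩ VH) RK RH) (ρ a) (ρ b) := by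
    rintro a b (hab | hab)
    · rw [hρK a (hK a b hab).1, hρK b (hK a b hab).2]
      exact .rel _ _ (Or.inl hab)
    · obtain ⟨haU, hρa⟩ := hρH a (hH a b hab).1
      obtain ⟨hbU, hρb⟩ := hρH b (hH a b hab).2
      have hρab : EqvGen RH (ρ a) (ρ b) :=
        ((hρa.symm _ _).trans _ _ _ (.rel _ _ hab)).trans _ _ _ hρb
      exact .rel _ _ (Or.inr ⟨haU, hbU, hρab⟩)
  intro x hx y hy
  simpa only [hρK x hx, hρK y hy] using (hconn x y).map hstep

theorem connected_of_eqvGen_glued (hcover : VK ∪ VH = Set.univ)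
    (hnoIslands : ∀ x ∈ VH, ∃ u ∈ VK ∩ VH, EqvGen RH x u)
    (hglued : ∀ x ∈ VK, ∀ y ∈ VK, EqvGen (gluedAdj (VK ∩ VH) RK RH) x y) :
    ∀ x y, EqvGen (RK ⊔ RH) x y := by
  have hH_le : ∀ a b, EqvGen RH a b → EqvGen (RK ⊔ RH) a b :=
    EqvGen.mono fun _ _ => Or.inr
  have hglued_le : ∀ a b, EqvGen (gluedAdj (VK ∩ VH) RK RH) a b → EqvGen (RK ⊔ RH) a b :=
    EqvGen.eqvGen_le fun a b hab => hab.elim (fun h => .rel _ _ (Or.inl h)) (hH_le a b ·.2.2)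
  have hreach_VK : ∀ v, ∃ w ∈ VK, EqvGen (RK ⊔ RH) v w := by
    intro v
    rcases Set.eq_univ_iff_forall.mp hcover v with hv | hv
    · exact ⟨v, hv, .refl v⟩
    · obtain ⟨u, hu, hvu⟩ := hnoIslands v hv
      exact ⟨u, hu.1, hH_le v u hvu⟩
  intro x y
  obtain ⟨x', hx', hxx'⟩ := hreach_VK x
  obtain ⟨y', hy', hyy'⟩ := hreach_VK y
  exact (hxx'.trans _ _ _ (hglued_le _ _ (hglued x' hx' y' hy'))).trans _ _ _ (hyy'.symm _ _)

theorem connected_iff_noIslands_and_eqvGen_glued (hcover : VK ∪ VH = Set.univ)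
    (hU : (VK ∩ VH).Nonempty)
    (hK : ∀ a b, RK a b → a ∈ VK ∧ b ∈ VK) (hH : ∀ a b, RH a b → a ∈ VH ∧ b ∈ VH) :
    (∀ x y, EqvGen (RK ⊔ RH) x y) ↔
      (∀ x ∈ VH, ∃ u ∈ VK ∩ VH, EqvGen RH x u) ∧ ∀ x ∈ VK, ∀ y ∈ VK,
        EqvGen (gluedAdj (VK ∩ VH) RK RH) x y := by
  refine ⟨fun hconn => ?_, fun ⟨hnoIslands, hglued⟩ =>
    connected_of_eqvGen_glued hcover hnoIslands hglued⟩
  have hnoIslands := exists_eqvGen_mem_inter_of_connected hU hK hH hconn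
  exact ⟨hnoIslands, eqvGen_glued_of_connected hcover hK hH hnoIslands hconn⟩

end Gluing

section StateGraphs

variable {V E EK EH : Type}

theorem edgeAdj_mem {S : Set V} {s t : E → V} (hS : ∀ e, s e ∈ S ∧ t e ∈ S) (ε : E → Bool) :
    ∀ a b, edgeAdj s t ε a b → a ∈ S ∧ b ∈ S := by
  rintro a b ⟨e, -, ⟨rfl, rfl⟩ | ⟨rfl, rfl⟩⟩
  exacts [hS e, (hS e).symm]

theorem edgeAdj_sum_elim (sK tK : EK → V) (sH tH : EH → V) (εK : EK → Bool) (εH : EH → Bool)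
    (a b : V) :
    edgeAdj (Sum.elim sK sH) (Sum.elim tK tH) (Sum.elim εK εH) a b ↔
      edgeAdj sK tK εK a b ∨ edgeAdj sH tH εH a b := by
  simp only [edgeAdj, Sum.exists, Sum.elim_inl, Sum.elim_inr]

theorem partRel_inducedPart (U : Set V) (s t : E → V) (ε : E → Bool) (a b : V) :
    partRel U (inducedPart U s t ε) a b ↔ a ∈ U ∧ b ∈ U ∧ EqvGen (edgeAdj s t ε) a b :=
  ⟨fun ⟨ha, hb, h⟩ => ⟨ha, hb, h⟩, fun ⟨ha, hb, h⟩ => ⟨ha, hb, h⟩⟩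

theorem connectedState_sum_elim_iff {VK VH : Set V} (hcover : VK ∪ VH = Set.univ)
    (hU : (VK ∩ VH).Nonempty) {sK tK : EK → V} (hK : ∀ e, sK e ∈ VK ∧ tK e ∈ VK)
    {sH tH : EH → V} (hH : ∀ e, sH e ∈ VH ∧ tH e ∈ VH) (εK : EK → Bool) (εH : EH → Bool) :
    ConnectedState Set.univ (Sum.elim sK sH) (Sum.elim tK tH) (Sum.elim εK εH) ↔
      NoIslands VH (VK ∩ VH) sH tH εH ∧
        ConnectedModOn VK sK tK (partRel (VK ∩ VH) (inducedPart (VK ∩ VH) sH tH εH)) εK := by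
  simp only [ConnectedState, ConnectedModOn, NoIslands, or_false, edgeAdj_sum_elim,
    partRel_inducedPart, Set.mem_univ, forall_const]
  exact connected_iff_noIslands_and_eqvGen_glued hcover hU (edgeAdj_mem hK εK) (edgeAdj_mem hH εH)

end StateGraphs

section Projections

variable {Λ A B : Type} [Fintype Λ] [Fintype A] [Fintype B]

theorem projC_apply (C : Set Λ) (ψ : Λ → ℂ) (x : Λ) :
    projC C ψ x = if x ∈ C then ψ x else 0 :=
  rfl

theorem tensorOp_projC (C₁ : Set A) (C₂ : Set B) :
    tensorOp (projC C₁) (projC C₂) = projC {x : A × B | x.1 ∈ C₁ ∧ x.2 ∈ C₂} := by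
  refine LinearMap.ext fun ψ => funext fun q => ?_
  show ∑ x : A × B, ψ x * _ = _
  rw [Fintype.sum_eq_single q]
  · by_cases h₁ : q.1 ∈ C₁ <;> by_cases h₂ : q.2 ∈ C₂ <;> simp [projC_apply, h₁, h₂]
  · intro x hx
    by_cases h : q.1 = x.1
    · have h' : q.2 ≠ x.2 := fun h' => hx (Prod.ext h h').symm
      simp [projC_apply, h']
    · simp [projC_apply, h]

theorem sum_projC_of_pairwise_disjoint {ι : Type*} [Fintype ι] {C : ι → Set Λ}
    (hC : Pairwise (Function.onFun Disjoint C)) :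
    ∑ i, projC (C i) = projC (⋃ i, C i) := by
  refine LinearMap.ext fun ψ => funext fun x => ?_
  simp only [LinearMap.coe_sum, Finset.sum_apply, projC_apply, Set.mem_iUnion]
  by_cases hx : ∃ i, x ∈ C i
  · obtain ⟨i, hi⟩ := hx
    rw [Fintype.sum_eq_single i fun j hj => if_neg fun hj' => (hC hj).notMem_of_mem_left hj' hi]
    simp [hi, show ∃ i, x ∈ C i from ⟨i, hi⟩]
  · simp only [hx, if_false]
    exact Finset.sum_eq_zero fun i _ => if_neg fun hi => hx ⟨i, hi⟩

end Projections

/-- the quantum reliability operator of the union `G = K ∪ H`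
decomposes as `Q̂R_G = Σ_γ Q̂R_{K/γ} ⊗ Ô_γ`, where `Ô_γ` projects onto the span
of island-free states of `H` inducing the partition `γ` of `U`. -/
theorem qr_operator_island_decomposition {V EK EH : Type}
    [Fintype V] [Fintype EK] [Fintype EH]
    (VK VH : Set V) (hcover : VK ∪ VH = Set.univ) (hU : (VK ∩ VH).Nonempty)
    (sK tK : EK → V) (hK : ∀ e, sK e ∈ VK ∧ tK e ∈ VK)
    (sH tH : EH → V) (hH : ∀ e, sH e ∈ VH ∧ tH e ∈ VH) :
    projC {εp : (EK → Bool) × (EH → Bool) |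
        ConnectedState Set.univ (Sum.elim sK sH) (Sum.elim tK tH)
          (Sum.elim εp.1 εp.2)}
      = ∑ γ : Setoid ↥(VK ∩ VH),
          tensorOp
            (projC {ε : EK → Bool | ConnectedModOn VK sK tK (partRel (VK ∩ VH) γ) ε})
            (projC {ε : EH → Bool | NoIslands VH (VK ∩ VH) sH tH ε ∧
                inducedPart (VK ∩ VH) sH tH ε = γ}) := by
  simp_rw [tensorOp_projC]
  rw [sum_projC_of_pairwise_disjoint]
  · congr 1
    ext ⟨εK, εH⟩
    simp only [Set.mem_ofPred_eq, Set.mem_iUnion,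
      connectedState_sum_elim_iff hcover hU hK hH]
    exact ⟨fun ⟨hnoIslands, hglued⟩ => ⟨_, hglued, hnoIslands, rfl⟩,
      fun ⟨_, hglued, hnoIslands, hγ⟩ => ⟨hnoIslands, hγ ▸ hglued⟩⟩
  · rintro γ γ' hne
    exact Set.disjoint_left.mpr fun q ⟨_, _, hγ⟩ ⟨_, _, hγ'⟩ => hne (hγ.symm.trans hγ')
end
end

section
/- Let G be a finite graph that is the union of graphs K and H sharing only the vertices U. For each partition γ' of U, the quantum reliability operator of H/γ' satisfies Q̂R_{H/γ'} = Σ_{γ ∈ Γ(U)} α_{γ',γ} Ô_γ, where α_{γ',γ} = 1 if γ ∧ γ' has a single block and 0 otherwise. -/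
open scoped Classical
noncomputable section

/-!
Write `~` for the equivalence relation generated by the operating edges of `H` together with the
gluing `γ'` of `U`. A `~`-chain alternates between paths in `H` and jumps along `γ'` inside `U`;
hence on `U` the relation `~` is the common coarsening `P(ε) ⊔ γ'`, and a chain that jumps at all
leaves its starting point along a path in `H` ending in `U`. So a state is connected in `H/γ'` iff
it has no islands and `P(ε) ⊔ γ' = ⊤`, and sorting the states by `P(ε)` writes the projection onto
the connected states as the sum of the `Ô_γ` with `γ ⊔ γ' = ⊤`.
-/

open Relation

section GluingAlongPartition

variable {α : Type} {U : Set α} {r : α → α → Prop} {γ : Setoid U}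

theorem eqvGen_or_exists_of_eqvGen_or_partRel {x y : α}
    (h : EqvGen (fun a b => r a b ∨ partRel U γ a b) x y) :
    EqvGen r x y ∨ ∃ u v : U, EqvGen r x u ∧ EqvGen r v y ∧
      (Setoid.comap Subtype.val (EqvGen.setoid r) ⊔ γ) u v := by
  induction h with
  | rel a b hab =>
    rcases hab with hr | ⟨ha, hb, hγ⟩
    · exact .inl (.rel _ _ hr)
    · exact .inr ⟨⟨a, ha⟩, ⟨b, hb⟩, .refl a, .refl b, Setoid.le_def.mp le_sup_right hγ⟩
  | refl a => exact .inl (.refl a)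
  | symm a b _ ih =>
    rcases ih with h | ⟨u, v, hau, hvb, huv⟩
    · exact .inl (.symm _ _ h)
    · exact .inr ⟨v, u, .symm _ _ hvb, .symm _ _ hau, Setoid.symm' _ huv⟩
  | trans a b c _ _ ih₁ ih₂ =>
    rcases ih₁, ih₂ with ⟨h₁ | ⟨u₁, v₁, hau₁, hv₁b, huv₁⟩, h₂ | ⟨u₂, v₂, hbu₂, hv₂c, huv₂⟩⟩
    · exact .inl (.trans _ _ _ h₁ h₂)
    · exact .inr ⟨u₂, v₂, .trans _ _ _ h₁ hbu₂, hv₂c, huv₂⟩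
    · exact .inr ⟨u₁, v₁, hau₁, .trans _ _ _ hv₁b h₂, huv₁⟩
    · have hv₁u₂ : (Setoid.comap Subtype.val (EqvGen.setoid r) ⊔ γ) v₁ u₂ :=
        Setoid.le_def.mp le_sup_left (EqvGen.trans _ _ _ hv₁b hbu₂)
      exact .inr ⟨u₁, v₂, hau₁, hv₂c, Setoid.trans' _ (Setoid.trans' _ huv₁ hv₁u₂) huv₂⟩

theorem comap_val_eqvGen_or_partRel :
    Setoid.comap Subtype.val (EqvGen.setoid fun a b => r a b ∨ partRel U γ a b) =
      Setoid.comap Subtype.val (EqvGen.setoid r) ⊔ γ := by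
  refine le_antisymm (Setoid.le_def.mpr fun {u v} huv => ?_) (sup_le ?_ ?_)
  · rcases eqvGen_or_exists_of_eqvGen_or_partRel huv with h | ⟨u', v', huu', hv'v, hu'v'⟩
    · exact Setoid.le_def.mp le_sup_left h
    · exact Setoid.trans' _ (Setoid.trans' _ (Setoid.le_def.mp le_sup_left huu') hu'v')
        (Setoid.le_def.mp le_sup_left hv'v)
  · exact Setoid.le_def.mpr fun h => EqvGen.mono (fun _ _ => .inl) _ _ h
  · exact Setoid.le_def.mpr fun {u v} h => EqvGen.rel _ _ (.inr ⟨u.2, v.2, h⟩)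

end GluingAlongPartition

section QuotientGraph

variable {V E : Type} {S U : Set V} {s t : E → V} {ε : E → Bool}

theorem inducedPart_eq_comap :
    inducedPart U s t ε = Setoid.comap Subtype.val (EqvGen.setoid (edgeAdj s t ε)) :=
  rfl

theorem connectedModOn_partRel_iff (γ : Setoid U) (hUS : U ⊆ S) (hU : U.Nonempty) :
    ConnectedModOn S s t (partRel U γ) ε ↔
      NoIslands S U s t ε ∧ inducedPart U s t ε ⊔ γ = ⊤ := by
  rw [inducedPart_eq_comap, ← comap_val_eqvGen_or_partRel, Setoid.eq_top_iff]
  constructor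
  · intro hconn
    obtain ⟨u₀, hu₀⟩ := hU
    refine ⟨fun x hx => ?_, fun u v => hconn u (hUS u.2) v (hUS v.2)⟩
    rcases eqvGen_or_exists_of_eqvGen_or_partRel (hconn x hx u₀ (hUS hu₀)) with h | ⟨u, _, hxu, _⟩
    · exact ⟨u₀, hu₀, h⟩
    · exact ⟨u, u.2, hxu⟩
  · rintro ⟨hislands, htop⟩ x hx y hy
    obtain ⟨u, hu, hxu⟩ := hislands x hx
    obtain ⟨v, hv, hyv⟩ := hislands y hy
    have hglue : ∀ {a b}, EqvGen (edgeAdj s t ε) a b →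
        EqvGen (fun a b => edgeAdj s t ε a b ∨ partRel U γ a b) a b :=
      fun h => EqvGen.mono (fun _ _ => Or.inl) _ _ h
    exact .trans _ _ _ (hglue hxu) (.trans _ _ _ (htop ⟨u, hu⟩ ⟨v, hv⟩) (.symm _ _ (hglue hyv)))

end QuotientGraph

theorem projC_and_eq_sum_smul_projC_fiber {Λ ι : Type} [Fintype Λ] [Fintype ι]
    (P : Λ → Prop) (Q : ι → Prop) (f : Λ → ι) :
    projC {x | P x ∧ Q (f x)} = ∑ i, (if Q i then (1 : ℂ) else 0) • projC {x | P x ∧ f x = i} := by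
  refine LinearMap.ext fun ψ => funext fun x => ?_
  simp only [projC, LinearMap.sum_apply, LinearMap.smul_apply, LinearMap.coe_mk, AddHom.coe_mk,
    Finset.sum_apply, Pi.smul_apply, smul_eq_mul, Set.mem_ofPred_eq]
  rw [Finset.sum_eq_single (f x) (fun i _ hi => by simp [Ne.symm hi]) (by simp)]
  by_cases hP : P x <;> by_cases hQ : Q (f x) <;> simp [hP, hQ]

theorem qr_operator_quotient_H_general {V EH : Type} [Fintype V] [Fintype EH]
    (VK VH : Set V) (hU : (VK ∩ VH).Nonempty)
    (sH tH : EH → V)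
    (γ' : Setoid ↥(VK ∩ VH)) :
    projC {ε : EH → Bool | ConnectedModOn VH sH tH (partRel (VK ∩ VH) γ') ε}
      = ∑ γ : Setoid ↥(VK ∩ VH),
          (if γ ⊔ γ' = ⊤ then (1 : ℂ) else 0) •
            projC {ε : EH → Bool | NoIslands VH (VK ∩ VH) sH tH ε ∧
                inducedPart (VK ∩ VH) sH tH ε = γ} := by
  have hconn : {ε : EH → Bool | ConnectedModOn VH sH tH (partRel (VK ∩ VH) γ') ε} =
      {ε | NoIslands VH (VK ∩ VH) sH tH ε ∧ inducedPart (VK ∩ VH) sH tH ε ⊔ γ' = ⊤} :=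
    Set.ext fun _ => connectedModOn_partRel_iff γ' Set.inter_subset_right hU
  rw [hconn]
  exact projC_and_eq_sum_smul_projC_fiber _ (· ⊔ γ' = ⊤) _

/-- `Q̂R_{H/γ'} = Σ_γ α_{γ',γ} Ô_γ`, where `α_{γ',γ} = 1` iff the
common coarsening of `γ` and `γ'` has a single block. -/
theorem qr_operator_quotient_H {V EH : Type} [Fintype V] [Fintype EH]
    (VK VH : Set V) (hcover : VK ∪ VH = Set.univ) (hU : (VK ∩ VH).Nonempty)
    (sH tH : EH → V) (hH : ∀ e, sH e ∈ VH ∧ tH e ∈ VH)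
    (γ' : Setoid ↥(VK ∩ VH)) :
    projC {ε : EH → Bool | ConnectedModOn VH sH tH (partRel (VK ∩ VH) γ') ε}
      = ∑ γ : Setoid ↥(VK ∩ VH),
          (if γ ⊔ γ' = ⊤ then (1 : ℂ) else 0) •
            projC {ε : EH → Bool | NoIslands VH (VK ∩ VH) sH tH ε ∧
                inducedPart (VK ∩ VH) sH tH ε = γ} :=
  qr_operator_quotient_H_general VK VH hU sH tH γ'
end
end
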